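/- arXiv:2510.04918 — 6 statements merged into one kernel-verified Lean document; each statement's English description precedes it below -/
import Mathlib

section
/- Let M be an n×n matrix over a field F with all diagonal entries nonzero. If M has rank k, then M has at least n²/(4k) nonzero entries. -/
open Finset

/-- Caro–Wei style greedy bound: any finite "graph" has an independent set of size at least
`∑ 1/(d i + 1)`. -/
lemma caro_wei_aux {V : Type*} [DecidableEq V] (r : V → V → Prop) [DecidableRel r]
    (hsymm : ∀ a b, r a b → r b a) (S : Finset V) :
    ∃ T ⊆ S, (∀ a ∈ T, ∀ b ∈ T, a ≠ b → ¬ r a b) ∧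
      ∑ i ∈ S, (1 : ℝ) / (((S.filter (fun j => j ≠ i ∧ r i j)).card : ℝ) + 1) ≤ T.card := by
  induction S using Finset.strongInduction with
  | _ S ih =>
    rcases S.eq_empty_or_nonempty with rfl | hS
    · exact ⟨∅, by simp⟩
    obtain ⟨i₀, hi₀S, hmin⟩ :=
      S.exists_min_image (fun i => (S.filter (fun j => j ≠ i ∧ r i j)).card) hS
    set d : V → ℕ := fun i => (S.filter (fun j => j ≠ i ∧ r i j)).card with hd
    set Nb : Finset V := insert i₀ (S.filter (fun j => j ≠ i₀ ∧ r i₀ j)) with hNb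
    have hNbS : Nb ⊆ S := insert_subset hi₀S (filter_subset _ _)
    have hi₀Nb : i₀ ∈ Nb := mem_insert_self _ _
    have hNbcard : Nb.card = d i₀ + 1 := by
      rw [hNb, card_insert_of_notMem (by simp)]
    have hssub : S \ Nb ⊂ S := sdiff_ssubset hNbS ⟨i₀, hi₀Nb⟩
    obtain ⟨T', hT'sub, hT'ind, hT'sum⟩ := ih (S \ Nb) hssub
    have hi₀T' : i₀ ∉ T' := fun h => (mem_sdiff.mp (hT'sub h)).2 hi₀Nb
    have hnoadj : ∀ b ∈ T', ¬ r i₀ b := by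
      intro b hb hrb
      have hbS := mem_sdiff.mp (hT'sub hb)
      exact hbS.2 (mem_insert_of_mem (mem_filter.mpr ⟨hbS.1,
        fun hbe => hi₀T' (hbe ▸ hb), hrb⟩))
    refine ⟨insert i₀ T', insert_subset hi₀S (hT'sub.trans sdiff_subset), ?_, ?_⟩
    · intro a ha b hb hab
      rcases mem_insert.mp ha with rfl | ha' <;> rcases mem_insert.mp hb with rfl | hb'
      · exact absurd rfl hab
      · exact hnoadj b hb'
      · exact fun hr => hnoadj a ha' (hsymm _ _ hr)
      · exact hT'ind a ha' b hb' hab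
    · rw [card_insert_of_notMem hi₀T']
      have hsplit : ∑ i ∈ S \ Nb, (1 : ℝ) / ((d i : ℝ) + 1)
          + ∑ i ∈ Nb, (1 : ℝ) / ((d i : ℝ) + 1)
          = ∑ i ∈ S, (1 : ℝ) / ((d i : ℝ) + 1) := sum_sdiff hNbS
    -- bound the Nb part by 1
      have h1 : ∑ i ∈ Nb, (1 : ℝ) / ((d i : ℝ) + 1) ≤ 1 := by
        have : ∑ i ∈ Nb, (1 : ℝ) / ((d i : ℝ) + 1)
            ≤ ∑ _i ∈ Nb, (1 : ℝ) / ((d i₀ : ℝ) + 1) := by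
          apply sum_le_sum
          intro i hi
          have := hmin i (hNbS hi)
          apply one_div_le_one_div_of_le (by positivity)
          linarith [(Nat.cast_le (α := ℝ)).mpr this]
        rw [sum_const, nsmul_eq_mul, hNbcard] at this
        calc ∑ i ∈ Nb, (1 : ℝ) / ((d i : ℝ) + 1)
            ≤ ((d i₀ : ℕ) + 1 : ℕ) * (1 / ((d i₀ : ℝ) + 1)) := this
          _ = 1 := by push_cast; field_simp
      have h2 : ∑ i ∈ S \ Nb, (1 : ℝ) / ((d i : ℝ) + 1)
          ≤ ∑ i ∈ S \ Nb, (1 : ℝ) / ((((S \ Nb).filter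
              (fun j => j ≠ i ∧ r i j)).card : ℝ) + 1) := by
        apply sum_le_sum
        intro i _
        apply one_div_le_one_div_of_le (by positivity)
        have hc : ((S \ Nb).filter (fun j => j ≠ i ∧ r i j)).card ≤ d i :=
          card_le_card (filter_subset_filter _ sdiff_subset)
        linarith [(Nat.cast_le (α := ℝ)).mpr hc]
      push_cast
      linarith
/-- A principal submatrix that is diagonal with nonzero diagonal gives a rank lower bound. -/
lemma card_le_rank_of_diag {F : Type*} [Field F] [DecidableEq F] {n : ℕ}
    (M : Matrix (Fin n) (Fin n) F) (hdiag : ∀ i, M i i ≠ 0)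
    (T : Finset (Fin n)) (hT : ∀ i ∈ T, ∀ j ∈ T, i ≠ j → M i j = 0) :
    T.card ≤ M.rank := by
  classical
  set v : T → (Fin n → F) := fun j => M j with hv
  have hli : LinearIndependent F v := by
    rw [Fintype.linearIndependent_iff]
    intro g hg j
    have hj := congrFun hg (j : Fin n)
    simp only [Finset.sum_apply, Pi.smul_apply, smul_eq_mul, Pi.zero_apply, hv] at hj
    rw [Fintype.sum_eq_single j (fun b hb => by
      have hbj : (b : Fin n) ≠ (j : Fin n) := fun h => hb (Subtype.coe_injective h)
      rw [hT _ b.2 _ j.2 hbj, mul_zero])] at hj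
    rcases mul_eq_zero.mp hj with h | h
    · exact h
    · exact absurd h (hdiag j)
  have h1 : T.card = Module.finrank F (Submodule.span F (Set.range v)) := by
    rw [finrank_span_eq_card hli, Fintype.card_coe]
  have h2 : Submodule.span F (Set.range v) ≤ Submodule.span F (Set.range M) :=
    Submodule.span_mono (by rintro _ ⟨j, rfl⟩; exact ⟨j, rfl⟩)
  rw [M.rank_eq_finrank_span_row, h1]
  exact Submodule.finrank_mono h2

/-- A rank-`k` matrix over a field with nonzero diagonal entries has at least
`n² / (4k)` nonzero entries. -/
theorem low_rank_nonzero_diag_dense {F : Type*} [Field F] [DecidableEq F]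
    {n k : ℕ} (hk : 1 ≤ k) (M : Matrix (Fin n) (Fin n) F)
    (hdiag : ∀ i, M i i ≠ 0) (hrank : M.rank = k) :
    ((n : ℝ)^2 / (4 * k) : ℝ) ≤
      ((Finset.univ.filter (fun p : Fin n × Fin n => M p.1 p.2 ≠ 0)).card : ℝ) := by
  classical
  set t := (Finset.univ.filter (fun p : Fin n × Fin n => M p.1 p.2 ≠ 0)).card with ht
  set d : Fin n → ℕ :=
    fun i => ((univ : Finset (Fin n)).filter (fun j => j ≠ i ∧ (M i j ≠ 0 ∨ M j i ≠ 0))).card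
    with hd
  obtain ⟨T, -, hTind, hTsum⟩ := caro_wei_aux (fun i j => M i j ≠ 0 ∨ M j i ≠ 0)
    (fun a b h => h.symm) univ
  have hTk : (T.card : ℝ) ≤ k := by
    have h := card_le_rank_of_diag M hdiag T (fun i hi j hj hij => by
      by_contra h
      exact hTind i hi j hj hij (Or.inl h))
    rw [hrank] at h
    exact_mod_cast h
  -- Cauchy–Schwarz
  have hCS : ((n : ℝ))^2 ≤ (∑ i, (1:ℝ)/((d i : ℝ)+1)) * (∑ i, ((d i : ℝ)+1)) := by
    have h := Finset.sum_sq_le_sum_mul_sum_of_sq_eq_mul (univ : Finset (Fin n))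
      (r := fun _ => (1:ℝ)) (f := fun i => (1:ℝ)/((d i : ℝ)+1)) (g := fun i => ((d i:ℝ)+1))
      (fun i _ => by positivity) (fun i _ => by positivity)
      (fun i _ => by field_simp)
    simpa using h
  -- row and column counts
  have hrowsum : ∑ i, ((univ : Finset (Fin n)).filter (fun j => M i j ≠ 0)).card = t := by
    rw [ht, Finset.card_filter, Fintype.sum_prod_type]
    simp only [Finset.card_filter]
  have hcolsum : ∑ i, ((univ : Finset (Fin n)).filter (fun j => M j i ≠ 0)).card = t := by
    rw [ht, Finset.card_filter, Fintype.sum_prod_type]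
    simp only [Finset.card_filter]
    exact Finset.sum_comm
  have hdeg : ∀ i, d i + 1 ≤ ((univ : Finset (Fin n)).filter (fun j => M i j ≠ 0)).card
      + ((univ : Finset (Fin n)).filter (fun j => M j i ≠ 0)).card := by
    intro i
    have hsub : insert i ((univ : Finset (Fin n)).filter
        (fun j => j ≠ i ∧ (M i j ≠ 0 ∨ M j i ≠ 0)))
        ⊆ ((univ : Finset (Fin n)).filter (fun j => M i j ≠ 0))
          ∪ ((univ : Finset (Fin n)).filter (fun j => M j i ≠ 0)) := by
      intro j hj
      rcases mem_insert.mp hj with rfl | hj'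
      · exact mem_union_left _ (mem_filter.mpr ⟨mem_univ _, hdiag j⟩)
      · rcases (mem_filter.mp hj').2.2 with h | h
        · exact mem_union_left _ (mem_filter.mpr ⟨mem_univ _, h⟩)
        · exact mem_union_right _ (mem_filter.mpr ⟨mem_univ _, h⟩)
    calc d i + 1 = (insert i ((univ : Finset (Fin n)).filter
            (fun j => j ≠ i ∧ (M i j ≠ 0 ∨ M j i ≠ 0)))).card := by
          rw [card_insert_of_notMem (by simp)]
      _ ≤ _ := card_le_card hsub
      _ ≤ _ := card_union_le _ _
  have hdsum : ∑ i, (d i + 1) ≤ 2 * t := by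
    calc ∑ i, (d i + 1) ≤ ∑ i, (((univ : Finset (Fin n)).filter (fun j => M i j ≠ 0)).card
          + ((univ : Finset (Fin n)).filter (fun j => M j i ≠ 0)).card) :=
        Finset.sum_le_sum (fun i _ => hdeg i)
      _ = ∑ i, ((univ : Finset (Fin n)).filter (fun j => M i j ≠ 0)).card
          + ∑ i, ((univ : Finset (Fin n)).filter (fun j => M j i ≠ 0)).card :=
        Finset.sum_add_distrib
      _ = 2 * t := by rw [hrowsum, hcolsum]; ring
  have hdsumR : (∑ i, ((d i : ℝ)+1)) ≤ 2 * t := by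
    have : ((∑ i, (d i + 1) : ℕ) : ℝ) ≤ ((2 * t : ℕ) : ℝ) := Nat.cast_le.mpr hdsum
    push_cast at this ⊢
    linarith
  have hk' : (1 : ℝ) ≤ k := by exact_mod_cast hk
  have htnn : (0 : ℝ) ≤ t := Nat.cast_nonneg _
  have hfnn : (0 : ℝ) ≤ ∑ i, (1:ℝ)/((d i : ℝ)+1) :=
    Finset.sum_nonneg (fun i _ => by positivity)
  have hgnn : (0 : ℝ) ≤ ∑ i, ((d i : ℝ)+1) :=
    Finset.sum_nonneg (fun i _ => by positivity)
  have hmain : ((n : ℝ))^2 ≤ (k : ℝ) * (2 * t) := by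
    calc ((n : ℝ))^2 ≤ (∑ i, (1:ℝ)/((d i : ℝ)+1)) * (∑ i, ((d i : ℝ)+1)) := hCS
      _ ≤ (k : ℝ) * (∑ i, ((d i : ℝ)+1)) := by
          apply mul_le_mul_of_nonneg_right _ hgnn
          exact le_trans (by exact_mod_cast hTsum) hTk
      _ ≤ (k : ℝ) * (2 * t) := by
          apply mul_le_mul_of_nonneg_left hdsumR (by positivity)
  rw [div_le_iff₀ (by positivity)]
  nlinarith [htnn, hk', hmain]
end

section
/- Let B be a t×n real matrix of rank t whose entries lie in {-1,0,1}. Then there exists a basis of the orthogonal complement of the row space of B (a subspace of dimension n−t) consisting of integer vectors each of whose entries has absolute value at most t^{t/2}. -/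
open scoped Real
open Matrix

theorem hadamard_bound {t : ℕ} (M : Matrix (Fin t) (Fin t) ℝ)
    (h : ∀ i j, |M i j| ≤ 1) : |M.det| ≤ (t : ℝ) ^ ((t : ℝ) / 2) := by
  classical
  haveI : WellFoundedLT (Fin t) := inferInstance
  let E := EuclideanSpace ℝ (Fin t)
  let f : Fin t → E := fun i => (WithLp.equiv 2 _).symm (M i)
  have hcard : Module.finrank ℝ E = Fintype.card (Fin t) := by
    simp [E, finrank_euclideanSpace]
  let b : OrthonormalBasis (Fin t) ℝ E := InnerProductSpace.gramSchmidtOrthonormalBasis hcard f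
  let e := EuclideanSpace.basisFun (Fin t) ℝ
  have hMt : e.toBasis.toMatrix f = Mᵀ := by
    ext i j
    simp [Module.Basis.toMatrix_apply, e, f, Matrix.transpose_apply]
  have h1 : Mᵀ.det = (e.toBasis.toMatrix ⇑b.toBasis).det * (b.toBasis.toMatrix f).det := by
    rw [← hMt, ← Matrix.det_mul, Module.Basis.toMatrix_mul_toMatrix]
  have h2 : |(e.toBasis.toMatrix ⇑b.toBasis).det| = 1 := by
    have := OrthonormalBasis.det_to_matrix_orthonormalBasis (𝕜 := ℝ) e b
    rw [Module.Basis.det_apply] at this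
    simpa [OrthonormalBasis.coe_toBasis] using this
  have h3 : (b.toBasis.toMatrix f).det = ∏ i, inner ℝ (b i) (f i) := by
    rw [← Module.Basis.det_apply]
    exact InnerProductSpace.gramSchmidtOrthonormalBasis_det hcard f
  have hnorm : ∀ i, ‖f i‖ ≤ Real.sqrt t := by
    intro i
    rw [EuclideanSpace.norm_eq]
    apply Real.sqrt_le_sqrt
    calc ∑ j, ‖(f i) j‖ ^ 2 ≤ ∑ _j : Fin t, (1:ℝ) := by
          apply Finset.sum_le_sum
          intro j _
          have : ‖(f i) j‖ ≤ 1 := by simpa [f, Real.norm_eq_abs] using h i j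
          nlinarith [norm_nonneg ((f i) j)]
      _ = t := by simp
  have h4 : |(b.toBasis.toMatrix f).det| ≤ (Real.sqrt t) ^ t := by
    rw [h3, Finset.abs_prod]
    calc ∏ i, |(inner ℝ (b i) (f i) : ℝ)| ≤ ∏ _i : Fin t, Real.sqrt t := by
          apply Finset.prod_le_prod
          · intro i _; exact abs_nonneg _
          · intro i _
            calc |(inner ℝ (b i) (f i) : ℝ)| ≤ ‖b i‖ * ‖f i‖ := abs_real_inner_le_norm _ _
              _ = ‖f i‖ := by rw [b.orthonormal.1 i, one_mul]
              _ ≤ Real.sqrt t := hnorm i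
      _ = (Real.sqrt t) ^ t := by simp
  have hfin : (Real.sqrt t) ^ t = (t : ℝ) ^ ((t : ℝ) / 2) := by
    rw [Real.sqrt_eq_rpow, ← Real.rpow_natCast ((t:ℝ) ^ ((1:ℝ)/2)) t,
      ← Real.rpow_mul (Nat.cast_nonneg t)]
    ring_nf
  calc |M.det| = |Mᵀ.det| := by rw [Matrix.det_transpose]
    _ = |(e.toBasis.toMatrix ⇑b.toBasis).det| * |(b.toBasis.toMatrix f).det| := by
        rw [h1, abs_mul]
    _ ≤ (Real.sqrt t) ^ t := by rw [h2, one_mul]; exact h4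
    _ = _ := hfin

/-- If `B` is a `t × n` real matrix of full row rank `t` with entries in `{-1,0,1}`,
then the orthogonal complement of its row space has a basis of `n - t` integer
vectors whose entries have absolute value at most `t^(t/2)`. -/
theorem integer_basis_of_orthocomplement {t n : ℕ} (htn : t ≤ n)
    (B : Matrix (Fin t) (Fin n) ℝ)
    (hent : ∀ i j, B i j = -1 ∨ B i j = 0 ∨ B i j = 1)
    (hrank : B.rank = t) :
    ∃ v : Fin (n - t) → (Fin n → ℝ),
      LinearIndependent ℝ v ∧
      (∀ r : Fin (n - t), ∀ i : Fin t, ∑ j, B i j * v r j = 0) ∧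
      (∀ x : Fin n → ℝ, (∀ i : Fin t, ∑ j, B i j * x j = 0) →
        x ∈ Submodule.span ℝ (Set.range v)) ∧
      (∀ r j, ∃ z : ℤ, v r j = (z : ℝ)) ∧
      (∀ r j, |v r j| ≤ (t : ℝ) ^ ((t : ℝ) / 2)) := by
  classical
  -- integer model
  set A : Matrix (Fin t) (Fin n) ℤ :=
    fun i j => if B i j = -1 then -1 else if B i j = 1 then 1 else 0 with hA
  have hBA : ∀ i j, B i j = ((A i j : ℤ) : ℝ) := by
    intro i j; rcases hent i j with h | h | h <;> norm_num [hA, h]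
  -- columns span
  have hspan : Submodule.span ℝ (Set.range Bᵀ) = ⊤ := by
    apply Submodule.eq_top_of_finrank_eq
    rw [show Set.range Bᵀ = Set.range B.col from rfl, ← Matrix.rank_eq_finrank_span_cols, hrank]
    simp [Module.finrank_pi]
  obtain ⟨bs, hbsub, hbspan, hbli⟩ := exists_linearIndependent ℝ (Set.range Bᵀ)
  haveI : Fintype bs := ((Set.finite_range Bᵀ).subset hbsub).fintype
  have hspan' : ⊤ ≤ Submodule.span ℝ (Set.range ((↑) : bs → (Fin t → ℝ))) := by
    rw [Subtype.range_coe, hbspan, hspan]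
  let bb : Module.Basis bs ℝ (Fin t → ℝ) := Module.Basis.mk hbli hspan'
  have hcardbs : Fintype.card bs = t := by
    have := Module.finrank_eq_card_basis bb
    simp only [Module.finrank_pi, Fintype.card_fin] at this
    omega
  let e0 : Fin t ≃ bs := (Fintype.equivFinOfCardEq hcardbs).symm
  have hmem : ∀ i : Fin t, ((e0 i : Fin t → ℝ)) ∈ Set.range Bᵀ := fun i => hbsub (e0 i).2
  let g : Fin t → Fin n := fun i => (hmem i).choose
  have hg : ∀ i, Bᵀ (g i) = (e0 i : Fin t → ℝ) := fun i => (hmem i).choose_spec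
  have hginj : Function.Injective g := by
    intro i i' h
    have : (e0 i : Fin t → ℝ) = (e0 i' : Fin t → ℝ) := by rw [← hg, ← hg, h]
    exact e0.injective (Subtype.ext this)
  -- invertible real submatrix
  set Cr : Matrix (Fin t) (Fin t) ℝ := B.submatrix id g with hCr
  have hCrcols : LinearIndependent ℝ (fun i' => Crᵀ i') := by
    have : (fun i' => Crᵀ i') = (fun i' => ((e0 i' : Fin t → ℝ))) := by
      funext i'; rw [← hg i']; funext i; rfl
    rw [this]
    exact hbli.comp e0 e0.injective
  have hCrUnit : IsUnit Cr := Matrix.linearIndependent_cols_iff_isUnit.mp hCrcols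
  have hdetCr : Cr.det ≠ 0 := by
    intro h
    exact (Matrix.isUnit_iff_isUnit_det Cr).mp hCrUnit |>.ne_zero h
  -- complement columns
  set img : Finset (Fin n) := Finset.univ.image g with himg
  have himgcard : img.card = t := by
    rw [himg, Finset.card_image_of_injective _ hginj, Finset.card_univ, Fintype.card_fin]
  have hcomplcard : imgᶜ.card = n - t := by
    rw [Finset.card_compl, himgcard, Fintype.card_fin]
  let siso := imgᶜ.orderIsoOfFin hcomplcard
  let s : Fin (n - t) → Fin n := fun r => (siso r : Fin n)
  have hsinj : Function.Injective s := by
    intro r r' h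
    exact siso.injective (Subtype.ext h)
  have hscompl : ∀ r, s r ∈ imgᶜ := fun r => (siso r).2
  have hsnotg : ∀ r, ¬ ∃ i, g i = s r := by
    intro r ⟨i, hi⟩
    have := hscompl r
    rw [Finset.mem_compl] at this
    exact this (by rw [himg, Finset.mem_image]; exact ⟨i, Finset.mem_univ i, hi⟩)
  -- integer matrices
  set C : Matrix (Fin t) (Fin t) ℤ := fun i i' => A i (g i') with hC
  set D : Matrix (Fin t) (Fin (n - t)) ℤ := fun i r => A i (s r) with hD
  have hCmap : C.map ((↑) : ℤ → ℝ) = Cr := by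
    ext i i'; rw [Matrix.map_apply]; simp [hC, hCr, Matrix.map_apply, ← hBA, Matrix.submatrix_apply]
  -- kernel vectors over ℤ
  set w : Fin (n - t) → Fin n → ℤ := fun r j =>
    if h : ∃ i, g i = j then -((C.adjugate * D) h.choose r)
    else if j = s r then C.det else 0 with hw
  have hwg : ∀ r i, w r (g i) = -((C.adjugate * D) i r) := by
    intro r i
    have h : ∃ i', g i' = g i := ⟨i, rfl⟩
    have hch : h.choose = i := hginj h.choose_spec
    simp [hw, dif_pos h, hch]
  have hws : ∀ r r', w r (s r') = if r' = r then C.det else 0 := by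
    intro r r'
    rw [hw]
    simp only [dif_neg (hsnotg r')]
    by_cases h : r' = r
    · simp [h]
    · rw [if_neg, if_neg h]
      intro hc; exact h (hsinj hc)
  -- kernel equation over ℤ
  have hker : ∀ r i, ∑ j, A i j * w r j = 0 := by
    intro r i
    rw [← Finset.sum_compl_add_sum img]
    have h1 : ∑ j ∈ img, A i j * w r j = -∑ i', C i i' * (C.adjugate * D) i' r := by
      rw [himg, Finset.sum_image (fun a _ b _ h => hginj h), ← Finset.sum_neg_distrib]
      apply Finset.sum_congr rfl
      intro i' _
      rw [hwg, hC]
      ring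
    have h2 : ∑ j ∈ imgᶜ, A i j * w r j = A i (s r) * C.det := by
      have : ∀ j ∈ imgᶜ, A i j * w r j = if j = s r then A i j * C.det else 0 := by
        intro j hj
        have hnot : ¬ ∃ i', g i' = j := by
          intro ⟨i', hi'⟩
          rw [Finset.mem_compl] at hj
          exact hj (by rw [himg, Finset.mem_image]; exact ⟨i', Finset.mem_univ i', hi'⟩)
        rw [hw]
        simp only [dif_neg hnot]
        by_cases h : j = s r <;> simp [h]
      rw [Finset.sum_congr rfl this, Finset.sum_ite_eq' imgᶜ (s r)]
      simp [hscompl r]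
    rw [h1, h2]
    have : ∑ i', C i i' * (C.adjugate * D) i' r = (C * (C.adjugate * D)) i r := by
      rw [Matrix.mul_apply]
    rw [this, ← Matrix.mul_assoc, Matrix.mul_adjugate, Matrix.smul_mul, Matrix.one_mul]
    rw [Matrix.smul_apply]; simp [hD, mul_comm]
  -- the real vectors
  have hdetcast : ((C.det : ℤ) : ℝ) = Cr.det := by
    rw [← hCmap]
    exact RingHom.map_det (Int.castRingHom ℝ) C
  have hdetcast' : ((C.det : ℤ) : ℝ) ≠ 0 := by rw [hdetcast]; exact hdetCr
  set Dr : Matrix (Fin t) (Fin (n - t)) ℝ := B.submatrix id s with hDr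
  have hDmap : D.map ((↑) : ℤ → ℝ) = Dr := by
    ext i r; rw [Matrix.map_apply]; simp [hD, hDr, Matrix.map_apply, ← hBA, Matrix.submatrix_apply]
  have hadjmap : C.adjugate.map ((↑) : ℤ → ℝ) = Cr.adjugate := by
    have h := RingHom.map_adjugate (Int.castRingHom ℝ) C
    simp only [RingHom.mapMatrix_apply] at h
    rw [← hCmap]
    exact h
  have hadjcast : ∀ i r, (((C.adjugate * D) i r : ℤ) : ℝ) = (Cr.adjugate * Dr) i r := by
    intro i r
    rw [Matrix.mul_apply, Matrix.mul_apply]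
    push_cast
    refine Finset.sum_congr rfl fun k _ => ?_
    have h1 : ((C.adjugate i k : ℤ) : ℝ) = Cr.adjugate i k := by rw [← hadjmap]; rfl
    have h2 : ((D k r : ℤ) : ℝ) = Dr k r := by rw [← hDmap]; rfl
    rw [h1, h2]
  have hB1 : ∀ i j, |B i j| ≤ 1 := by
    intro i j; rcases hent i j with h | h | h <;> norm_num [h]
  have hwcast : ∀ r r', ((w r (s r') : ℤ) : ℝ) = if r' = r then Cr.det else 0 := by
    intro r r'; rw [hws]; split <;> simp [hdetcast]
  have hkerR : ∀ (r : Fin (n - t)) (i : Fin t), ∑ j, B i j * ((w r j : ℤ) : ℝ) = 0 := by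
    intro r i
    have : ∑ j, B i j * ((w r j : ℤ) : ℝ) = (((∑ j, A i j * w r j : ℤ)) : ℝ) := by
      push_cast
      exact Finset.sum_congr rfl fun j _ => by rw [hBA]
    rw [this, hker, Int.cast_zero]
  refine ⟨fun r j => ((w r j : ℤ) : ℝ), ?_, hkerR, ?_, fun r j => ⟨w r j, rfl⟩, ?_⟩
  · rw [Fintype.linearIndependent_iff]
    intro cc hcc r'
    have h0 := congrFun hcc (s r')
    simp only [Finset.sum_apply, Pi.smul_apply, smul_eq_mul, Pi.zero_apply] at h0
    rw [Finset.sum_congr rfl (fun r _ => by rw [hwcast r r'])] at h0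
    simp only [mul_ite, mul_zero] at h0
    rw [Finset.sum_ite_eq Finset.univ r' (fun r => cc r * Cr.det)] at h0
    simp only [Finset.mem_univ, if_true] at h0
    exact (mul_eq_zero.mp h0).resolve_right hdetCr
  · -- spanning
    intro x hx
    have hxk : x ∈ LinearMap.ker B.mulVecLin := by
      rw [LinearMap.mem_ker]
      funext i
      simpa [Matrix.mulVecLin_apply, Matrix.mulVec, dotProduct] using hx i
    set V := Submodule.span ℝ (Set.range (fun r j => ((w r j : ℤ) : ℝ))) with hV
    have hle : V ≤ LinearMap.ker B.mulVecLin := by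
      rw [hV, Submodule.span_le]
      rintro _ ⟨r, rfl⟩
      rw [SetLike.mem_coe, LinearMap.mem_ker]
      funext i
      simpa [Matrix.mulVecLin_apply, Matrix.mulVec, dotProduct] using hkerR r i
    have hli : LinearIndependent ℝ (fun r j => ((w r j : ℤ) : ℝ)) := by
      rw [Fintype.linearIndependent_iff]
      intro cc hcc r'
      have h0 := congrFun hcc (s r')
      simp only [Finset.sum_apply, Pi.smul_apply, smul_eq_mul, Pi.zero_apply] at h0
      rw [Finset.sum_congr rfl (fun r _ => by rw [hwcast r r'])] at h0
      simp only [mul_ite, mul_zero] at h0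
      rw [Finset.sum_ite_eq Finset.univ r' (fun r => cc r * Cr.det)] at h0
      simp only [Finset.mem_univ, if_true] at h0
      exact (mul_eq_zero.mp h0).resolve_right hdetCr
    have hfinV : Module.finrank ℝ V = n - t := by
      rw [hV, finrank_span_eq_card hli, Fintype.card_fin]
    have hfinK : Module.finrank ℝ (LinearMap.ker B.mulVecLin) = n - t := by
      have h1 := LinearMap.finrank_range_add_finrank_ker B.mulVecLin
      have h2 : Module.finrank ℝ (LinearMap.range B.mulVecLin) = t := by
        rw [← Matrix.rank, hrank]
      rw [h2] at h1
      simp only [Module.finrank_pi, Fintype.card_fin] at h1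
      omega
    have : V = LinearMap.ker B.mulVecLin :=
      Submodule.eq_of_le_of_finrank_eq hle (by rw [hfinV, hfinK])
    rw [this]
    exact hxk
  · -- bound
    intro r j
    have hnn : (0:ℝ) ≤ (t : ℝ) ^ ((t : ℝ) / 2) := Real.rpow_nonneg (Nat.cast_nonneg t) _
    by_cases hj : ∃ i, g i = j
    · rw [hw]
      simp only [dif_pos hj]
      push_cast
      rw [abs_neg, hadjcast]
      set i₀ := hj.choose
      have hcol : (Cr.adjugate * Dr) i₀ r =
          (Cr.updateCol i₀ (fun k => Dr k r)).det := by
        have h1 : (Cr.adjugate * Dr) i₀ r = (Cr.adjugate *ᵥ fun k => Dr k r) i₀ := by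
          simp [Matrix.mul_apply, Matrix.mulVec, dotProduct]
        rw [h1, ← Matrix.cramer_eq_adjugate_mulVec, Matrix.cramer_apply]
      rw [hcol]
      apply hadamard_bound
      intro a b
      rw [Matrix.updateCol_apply]
      split
      · exact hB1 _ _
      · exact hB1 _ _
    · rw [hw]
      simp only [dif_neg hj]
      split
      · rw [hdetcast]
        apply hadamard_bound
        intro a b
        exact hB1 _ _
      · simpa using hnn
end

section
/- Let (Enc, Dec, ⊕) be a deterministic path-independent algorithm with bound m, and let b_1,…,b_t ∈ {-1,0,1}ⁿ be vectors with Enc(b_i) = Enc(0) for all i. For any x ∈ ℤⁿ expressible as x = Σ_{i=1}^t α_i b_i with α ∈ ℤᵗ and t·|α_i| ≤ m−1 for all i, one has Enc(x) = Enc(0). -/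
section Aux
variable {n m : ℕ} {W : Type*}

/-- One coordinate step of applying increment vector `c`. -/
def encStep (upd : W → Fin n → ℤ → W) (c : Fin n → ℤ) (w : W) (j : Fin n) : W :=
  if c j = 0 then w else upd w j (c j)

/-- Add `c` on the coordinates listed in `L`. -/
def addOn (c : Fin n → ℤ) (L : List (Fin n)) (z : Fin n → ℤ) : Fin n → ℤ :=
  fun j => if j ∈ L then z j + c j else z j

lemma foldl_enc (Enc : (Fin n → ℤ) → W) (upd : W → Fin n → ℤ → W)
    (hpi : ∀ x : Fin n → ℤ, (∀ j, |x j| ≤ (m : ℤ) - 1) →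
      ∀ i : Fin n, ∀ ξ : ℤ, (ξ = 1 ∨ ξ = -1) →
        upd (Enc x) i ξ = Enc (Function.update x i (x i + ξ)))
    (c : Fin n → ℤ) (hc : ∀ j, |c j| ≤ 1) :
    ∀ (L : List (Fin n)), L.Nodup → ∀ (z : Fin n → ℤ),
      (∀ j, |z j| ≤ (m:ℤ) - 1) → (∀ j ∈ L, |z j + c j| ≤ (m:ℤ) - 1) →
      L.foldl (encStep upd c) (Enc z) = Enc (addOn c L z) := by
  intro L
  induction L with
  | nil =>
    intro _ z _ _
    have : addOn c [] z = z := by funext j; simp [addOn]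
    simp [this]
  | cons j L' ih =>
    intro hnd z hz hzc
    have hjL' : j ∉ L' := (List.nodup_cons.mp hnd).1
    have hnd' : L'.Nodup := (List.nodup_cons.mp hnd).2
    by_cases hcj : c j = 0
    · have hstep : encStep upd c (Enc z) j = Enc z := by simp [encStep, hcj]
      have haddOn : addOn c (j :: L') z = addOn c L' z := by
        funext j'
        by_cases h : j' = j
        · subst h
          by_cases h2 : j' ∈ L' <;> simp [addOn, h2, hcj]
        · simp [addOn, h]
      rw [List.foldl_cons, hstep, haddOn]
      exact ih hnd' z hz (fun j' hj' => hzc j' (List.mem_cons_of_mem _ hj'))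
    · have hξ : c j = 1 ∨ c j = -1 := by
        have h1 := abs_le.mp (hc j); omega
      have hstep : encStep upd c (Enc z) j = Enc (Function.update z j (z j + c j)) := by
        simp only [encStep, if_neg hcj]
        exact hpi z hz j (c j) hξ
      set z' := Function.update z j (z j + c j) with hz'def
      have hz' : ∀ j', |z' j'| ≤ (m:ℤ) - 1 := by
        intro j'
        by_cases h : j' = j
        · subst h; simp [hz'def]; linarith [hzc j' List.mem_cons_self]
        · simp [hz'def, Function.update_of_ne h]; linarith [hz j']
      have hz'c : ∀ j' ∈ L', |z' j' + c j'| ≤ (m:ℤ) - 1 := by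
        intro j' hj'
        have h : j' ≠ j := fun h => hjL' (h ▸ hj')
        rw [hz'def, Function.update_of_ne h]
        exact hzc j' (List.mem_cons_of_mem _ hj')
      have haddOn : addOn c L' z' = addOn c (j :: L') z := by
        funext j'
        by_cases h : j' = j
        · subst h
          simp [addOn, hjL', hz'def]
        · simp [addOn, hz'def, Function.update_of_ne h, h]
      rw [List.foldl_cons, hstep, ih hnd' z' hz' hz'c, haddOn]

/-- Transfer lemma: if `Enc y = Enc z` then `Enc (y + c) = Enc (z + c)` under bounds. -/
lemma transfer (Enc : (Fin n → ℤ) → W) (upd : W → Fin n → ℤ → W)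
    (hpi : ∀ x : Fin n → ℤ, (∀ j, |x j| ≤ (m : ℤ) - 1) →
      ∀ i : Fin n, ∀ ξ : ℤ, (ξ = 1 ∨ ξ = -1) →
        upd (Enc x) i ξ = Enc (Function.update x i (x i + ξ)))
    (c : Fin n → ℤ) (hc : ∀ j, |c j| ≤ 1)
    (y z : Fin n → ℤ)
    (hy : ∀ j, |y j| ≤ (m:ℤ) - 1) (hyc : ∀ j, |y j + c j| ≤ (m:ℤ) - 1)
    (hz : ∀ j, |z j| ≤ (m:ℤ) - 1) (hzc : ∀ j, |z j + c j| ≤ (m:ℤ) - 1)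
    (h : Enc y = Enc z) : Enc (y + c) = Enc (z + c) := by
  have hfull : ∀ w : Fin n → ℤ, addOn c (List.finRange n) w = w + c := by
    intro w; funext j; simp [addOn, List.mem_finRange]
  have h1 := foldl_enc (m := m) Enc upd hpi c hc (List.finRange n) (List.nodup_finRange n)
      y hy (fun j _ => hyc j)
  have h2 := foldl_enc (m := m) Enc upd hpi c hc (List.finRange n) (List.nodup_finRange n)
      z hz (fun j _ => hzc j)
  rw [hfull] at h1 h2
  rw [← h1, ← h2, h]

end Aux

/-- For a deterministic path-independent algorithm `(Enc, upd)` with bound `m`,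
if `b₁,…,b_t ∈ {-1,0,1}ⁿ` satisfy `Enc bᵢ = Enc 0`, then any integer combination
`x = Σᵢ αᵢ bᵢ` with `t·|αᵢ| ≤ m - 1` for all `i` satisfies `Enc x = Enc 0`. -/
theorem zero_set_closed_under_bounded_int_combinations {n m t : ℕ} {W : Type*}
    (Enc : (Fin n → ℤ) → W) (upd : W → Fin n → ℤ → W)
    (hpi : ∀ x : Fin n → ℤ, (∀ j, |x j| ≤ (m : ℤ) - 1) →
      ∀ i : Fin n, ∀ ξ : ℤ, (ξ = 1 ∨ ξ = -1) →
        upd (Enc x) i ξ = Enc (Function.update x i (x i + ξ)))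
    (b : Fin t → (Fin n → ℤ)) (hb : ∀ i j, |b i j| ≤ 1)
    (hbz : ∀ i, Enc (b i) = Enc 0)
    (α : Fin t → ℤ) (hα : ∀ i, (t : ℤ) * |α i| ≤ (m : ℤ) - 1)
    (x : Fin n → ℤ) (hx : x = ∑ i, α i • b i) :
    Enc x = Enc 0 := by
  -- trivial case: t = 0
  rcases Nat.eq_zero_or_pos t with ht0 | ht
  · subst ht0
    simp only [Finset.univ_eq_empty, Finset.sum_empty] at hx
    rw [hx]
  -- trivial case: m ≤ 1 forces α = 0
  rcases Nat.lt_or_ge m 2 with hm | hm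
  · have hα0 : ∀ i, α i = 0 := by
      intro i
      have h1 := hα i
      have h2 : (1:ℤ) ≤ t := by exact_mod_cast ht
      have h3 : (m:ℤ) ≤ 1 := by exact_mod_cast Nat.lt_succ_iff.mp hm
      have h4 : |α i| ≤ 0 := by nlinarith [abs_nonneg (α i)]
      exact abs_eq_zero.mp (le_antisymm h4 (abs_nonneg _))
    have : x = 0 := by rw [hx]; exact Finset.sum_eq_zero fun i _ => by rw [hα0 i, zero_smul]
    rw [this]
  · -- main case: t ≥ 1, m ≥ 2
    have hm2 : (2:ℤ) ≤ (m:ℤ) := by exact_mod_cast hm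
    -- total bound on Σ |α i|
    have hS : (∑ i, |α i|) ≤ (m:ℤ) - 1 := by
      obtain ⟨i₀, -, hmax⟩ := Finset.exists_max_image Finset.univ (fun i => |α i|)
        (Finset.univ_nonempty_iff.mpr (Fin.pos_iff_nonempty.mp ht))
      calc (∑ i, |α i|) ≤ ∑ _i : Fin t, |α i₀| :=
            Finset.sum_le_sum fun i _ => hmax i (Finset.mem_univ i)
        _ = (t:ℤ) * |α i₀| := by rw [Finset.sum_const, Finset.card_univ, Fintype.card_fin,
            nsmul_eq_mul]
        _ ≤ (m:ℤ) - 1 := hα i₀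
    -- Enc (-(b i)) = Enc 0
    have hbz' : ∀ i, Enc (-(b i)) = Enc 0 := by
      intro i
      have hbd : ∀ j, |b i j| ≤ (m:ℤ) - 1 := fun j => le_trans (hb i j) (by omega)
      have := transfer (m := m) Enc upd hpi (-(b i))
        (fun j => by simpa using hb i j)
        (b i) 0 hbd
        (fun j => by simp; omega)
        (fun j => by simp; omega)
        (fun j => by simpa using hbd j)
        (hbz i)
      simpa using this.symm
    -- Enc (ε • b i) = Enc 0 for ε = ±1
    have hεbz : ∀ (ε : ℤ), (ε = 1 ∨ ε = -1) → ∀ i, Enc (ε • b i) = Enc 0 := by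
      rintro ε (rfl | rfl) i
      · simpa using hbz i
      · simpa using hbz' i
    -- pointwise bound on sums
    have hptbd : ∀ (β : Fin t → ℤ), (∀ i, |β i| ≤ |α i|) →
        ∀ j, |(∑ i, β i • b i) j| ≤ (m:ℤ) - 1 := by
      intro β hβ j
      have hev : (∑ i, β i • b i) j = ∑ i, β i * b i j := by
        rw [Finset.sum_apply]; exact Finset.sum_congr rfl fun i _ => rfl
      rw [hev]
      calc |∑ i, β i * b i j| ≤ ∑ i, |β i * b i j| := Finset.abs_sum_le_sum_abs _ _
        _ ≤ ∑ i, |α i| := Finset.sum_le_sum fun i _ => by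
            rw [abs_mul]
            calc |β i| * |b i j| ≤ |β i| * 1 :=
                  mul_le_mul_of_nonneg_left (hb i j) (abs_nonneg _)
              _ = |β i| := mul_one _
              _ ≤ |α i| := hβ i
        _ ≤ (m:ℤ) - 1 := hS
    -- main induction
    have key : ∀ N : ℕ, ∀ β : Fin t → ℤ, (∀ i, |β i| ≤ |α i|) →
        (∑ i, (β i).natAbs) ≤ N → Enc (∑ i, β i • b i) = Enc 0 := by
      intro N
      induction N with
      | zero =>
        intro β hβ hN
        have : ∀ i, β i = 0 := by
          intro i
          have h1 : (β i).natAbs ≤ ∑ i, (β i).natAbs :=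
            Finset.single_le_sum (f := fun i => (β i).natAbs)
              (fun i _ => Nat.zero_le _) (Finset.mem_univ i)
          omega
        have : (∑ i, β i • b i) = 0 := Finset.sum_eq_zero fun i _ => by
          rw [this i, zero_smul]
        rw [this]
      | succ N ih =>
        intro β hβ hN
        by_cases hall : ∀ i, β i = 0
        · have : (∑ i, β i • b i) = 0 := Finset.sum_eq_zero fun i _ => by
            rw [hall i, zero_smul]
          rw [this]
        · push_neg at hall
          obtain ⟨i₀, hi₀⟩ := hall
          set ε : ℤ := if 0 < β i₀ then 1 else -1 with hεdef
          have hε : ε = 1 ∨ ε = -1 := by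
            by_cases h : 0 < β i₀ <;> simp [hεdef, h]
          set β' : Fin t → ℤ := Function.update β i₀ (β i₀ - ε) with hβ'def
          have hβ'i₀ : β' i₀ = β i₀ - ε := by simp [hβ'def]
          have hβ'ne : ∀ i, i ≠ i₀ → β' i = β i := fun i h => by
            simp [hβ'def, Function.update_of_ne h]
          have habs : |β i₀ - ε| = |β i₀| - 1 := by
            by_cases hp : 0 < β i₀
            · rw [hεdef, if_pos hp, abs_of_nonneg (by omega : (0:ℤ) ≤ β i₀ - 1),
                abs_of_pos hp]
            · have hneg : β i₀ < 0 := by omega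
              rw [hεdef, if_neg hp, abs_of_nonpos (by omega : β i₀ - (-1) ≤ 0),
                abs_of_neg hneg]
              ring
          have hβ'le : ∀ i, |β' i| ≤ |α i| := by
            intro i
            by_cases h : i = i₀
            · subst h; rw [hβ'i₀, habs]
              have := hβ i; omega
            · rw [hβ'ne i h]; exact hβ i
          have hnatabs : (β' i₀).natAbs = (β i₀).natAbs - 1 ∧ 1 ≤ (β i₀).natAbs := by
            constructor
            · rw [hβ'i₀]
              have h1 : |β i₀ - ε| = |β i₀| - 1 := habs
              have h2 : ((β i₀ - ε).natAbs : ℤ) = |β i₀ - ε| := Int.abs_eq_natAbs _ |>.symm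
              have h3 : ((β i₀).natAbs : ℤ) = |β i₀| := Int.abs_eq_natAbs _ |>.symm
              omega
            · omega
          have hsumN : (∑ i, (β' i).natAbs) ≤ N := by
            have hdecomp : (∑ i, (β' i).natAbs)
                = (β' i₀).natAbs + ∑ i ∈ Finset.univ.erase i₀, (β' i).natAbs :=
              (Finset.add_sum_erase _ _ (Finset.mem_univ i₀)).symm
            have hdecomp2 : (∑ i, (β i).natAbs)
                = (β i₀).natAbs + ∑ i ∈ Finset.univ.erase i₀, (β i).natAbs :=
              (Finset.add_sum_erase _ _ (Finset.mem_univ i₀)).symm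
            have heq : (∑ i ∈ Finset.univ.erase i₀, (β' i).natAbs)
                = ∑ i ∈ Finset.univ.erase i₀, (β i).natAbs :=
              Finset.sum_congr rfl fun i hi => by
                rw [hβ'ne i (Finset.ne_of_mem_erase hi)]
            omega
          have ihβ' := ih β' hβ'le hsumN
          -- sum decomposition
          have hsum : (∑ i, β i • b i) = (∑ i, β' i • b i) + ε • b i₀ := by
            have h1 : (∑ i, β i • b i) - (∑ i, β' i • b i)
                = ∑ i, (β i - β' i) • b i := by
              rw [← Finset.sum_sub_distrib]
              exact Finset.sum_congr rfl fun i _ => (sub_smul _ _ _).symm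
            have h2 : ∀ i ∈ Finset.univ, (β i - β' i) • b i
                = if i = i₀ then ε • b i₀ else 0 := by
              intro i _
              by_cases h : i = i₀
              · subst h
                rw [hβ'i₀, if_pos rfl]
                congr 1; ring
              · rw [hβ'ne i h, if_neg h, sub_self, zero_smul]
            have hdiff : (∑ i, β i • b i) - (∑ i, β' i • b i) = ε • b i₀ := by
              rw [h1, Finset.sum_congr rfl h2, Finset.sum_ite_eq' Finset.univ i₀]
              simp
            exact sub_eq_iff_eq_add'.mp hdiff
          -- apply transfer
          have hcbd : ∀ j, |(ε • b i₀) j| ≤ 1 := by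
            intro j
            rcases hε with h | h <;> simp [h] <;> simpa using hb i₀ j
          have hy := hptbd β' hβ'le
          have hyc : ∀ j, |(∑ i, β' i • b i) j + (ε • b i₀) j| ≤ (m:ℤ) - 1 := by
            intro j
            have : (∑ i, β' i • b i) j + (ε • b i₀) j = (∑ i, β i • b i) j := by
              rw [hsum]; rfl
            rw [this]; exact hptbd β hβ j
          have htr := transfer (m := m) Enc upd hpi (ε • b i₀) hcbd
            (∑ i, β' i • b i) 0 hy hyc
            (fun j => by simp; omega)
            (fun j => by
              have := hcbd j
              simp only [Pi.zero_apply, zero_add]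
              omega)
            ihβ'
          rw [hsum, htr, zero_add]
          exact hεbz ε hε i₀
    rw [hx]
    exact key (∑ i, (α i).natAbs) α (fun i => le_refl _) (le_refl _)
end

section
/- Let ℓ < m/2 and let (Enc, ⊕) be a deterministic path-independent algorithm with bound m. For x, y ∈ {0,…,ℓ}ⁿ, one has Enc(x) = Enc(y) if and only if Enc(y − x) = Enc(0). -/
/-- For a deterministic path-independent algorithm `(Enc, upd)` with bound `m`
and `ℓ < m/2`, for `x, y ∈ {0,…,ℓ}ⁿ` one has `Enc x = Enc y` iff
`Enc (y - x) = Enc 0`. -/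
theorem enc_eq_iff_diff_in_zero_set {n m ℓ : ℕ} {W : Type*}
    (Enc : (Fin n → ℤ) → W) (upd : W → Fin n → ℤ → W)
    (hpi : ∀ x : Fin n → ℤ, (∀ j, |x j| ≤ (m : ℤ) - 1) →
      ∀ i : Fin n, ∀ ξ : ℤ, (ξ = 1 ∨ ξ = -1) →
        upd (Enc x) i ξ = Enc (Function.update x i (x i + ξ)))
    (hℓm : 2 * ℓ < m)
    (x y : Fin n → ℤ)
    (hx : ∀ j, 0 ≤ x j ∧ x j ≤ (ℓ : ℤ)) (hy : ∀ j, 0 ≤ y j ∧ y j ≤ (ℓ : ℤ)) :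
    Enc x = Enc y ↔ Enc (y - x) = Enc 0 := by
  have h2ℓ : (2 * ℓ : ℤ) ≤ (m : ℤ) - 1 := by omega
  -- step lemma
  have step : ∀ (a b : Fin n → ℤ) (i : Fin n) (ξ : ℤ), (ξ = 1 ∨ ξ = -1) →
      (∀ j, |a j| ≤ (m : ℤ) - 1) → (∀ j, |b j| ≤ (m : ℤ) - 1) →
      (∀ j, |Function.update a i (a i + ξ) j| ≤ (m : ℤ) - 1) →
      (∀ j, |Function.update b i (b i + ξ) j| ≤ (m : ℤ) - 1) →
      (Enc a = Enc b ↔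
        Enc (Function.update a i (a i + ξ)) = Enc (Function.update b i (b i + ξ))) := by
    intro a b i ξ hξ ha hb ha' hb'
    constructor
    · intro h
      rw [← hpi a ha i ξ hξ, ← hpi b hb i ξ hξ, h]
    · intro h
      have hξ' : (-ξ) = 1 ∨ (-ξ) = -1 := by rcases hξ with h1 | h1 <;> simp [h1]
      have e1 := hpi _ ha' i (-ξ) hξ'
      have e2 := hpi _ hb' i (-ξ) hξ'
      simp only [Function.update_self, Function.update_idem, add_neg_cancel_right,
        Function.update_eq_self] at e1 e2
      rw [← e1, ← e2, h]
    -- the difference vector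
  set d : Fin n → ℤ := y - x with hd
  have hdb : ∀ j, |d j| ≤ (ℓ : ℤ) := by
    intro j
    rw [abs_le]
    have := hx j; have := hy j
    constructor <;> simp [hd] <;> omega
  have key : ∀ (k : ℕ) (a : Fin n → ℤ), (∀ j, 0 ≤ a j ∧ a j ≤ (ℓ : ℤ)) →
      (∑ j, a j).toNat = k → (Enc a = Enc (a + d) ↔ Enc d = Enc 0) := by
    intro k
    induction k with
    | zero =>
      intro a ha hsum
      have hsum0 : ∑ j, a j = 0 := by
        have : 0 ≤ ∑ j, a j := Finset.sum_nonneg fun j _ => (ha j).1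
        omega
      have ha0 : a = 0 := by
        funext j
        have := (Finset.sum_eq_zero_iff_of_nonneg (fun j _ => (ha j).1)).mp hsum0 j
          (Finset.mem_univ j)
        simpa using this
      subst ha0
      simp [eq_comm]
    | succ k ih =>
      intro a ha hsum
      have hpos : 0 < ∑ j, a j := by omega
      have hex : ∃ i, 0 < a i := by
        by_contra hc
        push_neg at hc
        have : ∑ j, a j ≤ 0 := Finset.sum_nonpos fun j _ => hc j
        omega
      obtain ⟨i, hi⟩ := hex
      set a' : Fin n → ℤ := Function.update a i (a i - 1) with ha'
      have ha'b : ∀ j, 0 ≤ a' j ∧ a' j ≤ (ℓ : ℤ) := by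
        intro j
        by_cases hj : j = i
        · subst hj; simp [ha']; have := ha j; omega
        · simp [ha', Function.update_of_ne hj]; exact ⟨(ha j).1, (ha j).2⟩
      have hsum' : (∑ j, a' j).toNat = k := by
        have : ∑ j, a' j = (∑ j, a j) - 1 := by
          rw [ha', Finset.sum_update_of_mem (Finset.mem_univ i)]
          have : ∑ j ∈ Finset.univ \ {i}, a j = (∑ j, a j) - a i := by
            rw [eq_sub_iff_add_eq, Finset.sum_sdiff_eq_sub (by simp)]
            simp
          rw [this]; ring
        omega
      -- bounds for step lemma
      have Ba : ∀ j, |a j| ≤ (m : ℤ) - 1 := fun j => by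
        rw [abs_le]; have := ha j; constructor <;> omega
      have Bad : ∀ j, |(a + d) j| ≤ (m : ℤ) - 1 := fun j => by
        have h1 := ha j; have h2 := hdb j
        rw [abs_le] at h2 ⊢
        simp only [Pi.add_apply]
        constructor <;> omega
      have Ba' : ∀ j, |Function.update a i (a i + (-1)) j| ≤ (m : ℤ) - 1 := fun j => by
        by_cases hj : j = i
        · subst hj; simp; rw [abs_lt]; have := ha j; constructor <;> omega
        · rw [Function.update_of_ne hj]; exact Ba j
      have Bad' : ∀ j, |Function.update (a + d) i ((a + d) i + (-1)) j| ≤ (m : ℤ) - 1 :=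
        fun j => by
        by_cases hj : j = i
        · subst hj; simp
          have h1 := ha j; have h2 := hdb j
          rw [abs_le] at h2; rw [abs_lt]
          constructor <;> omega
        · rw [Function.update_of_ne hj]; exact Bad j
      have hstep := step a (a + d) i (-1) (Or.inr rfl) Ba Bad Ba' Bad'
      have heq1 : Function.update a i (a i + (-1)) = a' := by
        funext j; by_cases hj : j = i
        · subst hj; simp [ha']; ring
        · simp [ha', Function.update_of_ne hj]
      have heq2 : Function.update (a + d) i ((a + d) i + (-1)) = a' + d := by
        funext j; by_cases hj : j = i
        · subst hj; simp [ha']; ring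
        · simp [ha', Function.update_of_ne hj]
      rw [heq1, heq2] at hstep
      rw [hstep]
      exact ih a' ha'b hsum'
  have hmain := key (∑ j, x j).toNat x hx rfl
  have hxd : x + d = y := by funext j; simp [hd]
  rw [hxd] at hmain
  simpa [hd] using hmain
end

section
/- Let K ⊆ {-2ℓ,…,2ℓ}ⁿ be a set whose real span M = span_ℝ(K) has dimension t. Then for any x ∈ {0,…,ℓ}ⁿ, the set C(x) = {y ∈ {0,…,ℓ}ⁿ : y − x ∈ K} has at most (ℓ+1)ᵗ elements. -/
/-- If `K ⊆ {-2ℓ,…,2ℓ}ⁿ` is a set of integer vectors whose real span has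
dimension `t`, then for any `x ∈ {0,…,ℓ}ⁿ`, the set
`C(x) = {y ∈ {0,…,ℓ}ⁿ : y - x ∈ K}` has at most `(ℓ+1)ᵗ` elements. -/
theorem equivalence_class_size_bound {n ℓ t : ℕ} (K : Set (Fin n → ℤ))
    (hK : ∀ z ∈ K, ∀ j, |z j| ≤ (2 * ℓ : ℤ))
    (ht : Module.finrank ℝ
      (Submodule.span ℝ ((fun z : Fin n → ℤ => (fun j => (z j : ℝ))) '' K)) = t)
    (x : Fin n → ℤ) (hx : ∀ j, 0 ≤ x j ∧ x j ≤ (ℓ : ℤ)) :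
    Set.ncard {y : Fin n → ℤ | (∀ j, 0 ≤ y j ∧ y j ≤ (ℓ : ℤ)) ∧ y - x ∈ K}
      ≤ (ℓ + 1) ^ t := by
  classical
  set c : (Fin n → ℤ) → (Fin n → ℝ) := fun z j => (z j : ℝ) with hc
  set M : Submodule ℝ (Fin n → ℝ) := Submodule.span ℝ (c '' K) with hM
  have htM : Module.finrank ℝ M = t := ht
  haveI : FiniteDimensional ℝ M := inferInstance
  set φ : Fin n → Module.Dual ℝ M := fun j => (LinearMap.proj j).comp M.subtype with hφ
  have hsep : ∀ v : M, (∀ j, φ j v = 0) → v = 0 := by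
    intro v hv
    have : (v : Fin n → ℝ) = 0 := funext fun j => hv j
    exact Subtype.ext this
  obtain ⟨b, hbsub, hbspan, hbind⟩ := exists_linearIndependent ℝ (Set.range φ)
  have hbfin : b.Finite := hbind.setFinite
  haveI : Fintype b := hbfin.fintype
  have hbcard : (Fintype.card b) ≤ t := by
    have := hbind.fintype_card_le_finrank
    rwa [Subspace.dual_finrank_eq, htM] at this
  -- pick a coordinate for each functional in b
  have hψ : ∀ f : b, ∃ j, φ j = (f : Module.Dual ℝ M) := fun f => hbsub f.2
  choose ψ hψ using hψ
  set R : Finset (Fin n) := Finset.univ.image ψ with hR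
  have hRcard : R.card ≤ t :=
    le_trans (Finset.card_image_le.trans (by simp)) hbcard
  -- injectivity of projection onto R on M
  have hinj : ∀ v : M, (∀ j ∈ R, (v : Fin n → ℝ) j = 0) → v = 0 := by
    intro v hv
    have hb : ∀ f ∈ b, f v = 0 := by
      intro f hf
      have h1 := hv (ψ ⟨f, hf⟩) (Finset.mem_image_of_mem ψ (Finset.mem_univ _))
      have h2 : φ (ψ ⟨f, hf⟩) v = f v := by rw [hψ ⟨f, hf⟩]
      rw [← h2]
      exact h1
    have hall : ∀ j, φ j v = 0 := by
      intro j
      have hjmem : φ j ∈ Submodule.span ℝ b := by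
        rw [hbspan]; exact Submodule.subset_span ⟨j, rfl⟩
      have hker : Submodule.span ℝ b ≤ LinearMap.ker ((Module.Dual.eval ℝ M) v) := by
        rw [Submodule.span_le]
        intro f hf
        simpa [LinearMap.mem_ker] using hb f hf
      simpa using hker hjmem
    exact hsep v hall
  -- the injection into (R → Fin (ℓ+1))
  set S := {y : Fin n → ℤ | (∀ j, 0 ≤ y j ∧ y j ≤ (ℓ : ℤ)) ∧ y - x ∈ K} with hS
  have key : ∃ F : S → (R → Fin (ℓ + 1)), Function.Injective F := by
    refine ⟨fun y r => ⟨(y.1 r.1).toNat, ?_⟩, ?_⟩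
    · have h1 := (y.2.1 r.1).2
      exact Nat.lt_succ_of_le (Int.toNat_le.mpr h1)
    · intro y₁ y₂ hEq
      have hcoord : ∀ j ∈ R, y₁.1 j = y₂.1 j := by
        intro j hj
        have := congrFun hEq ⟨j, hj⟩
        have h' : (y₁.1 j).toNat = (y₂.1 j).toNat := congrArg Fin.val this
        have h₁ := (y₁.2.1 j).1
        have h₂ := (y₂.2.1 j).1
        omega
      have hwK₁ : c (y₁.1 - x) ∈ M := Submodule.subset_span ⟨_, y₁.2.2, rfl⟩
      have hwK₂ : c (y₂.1 - x) ∈ M := Submodule.subset_span ⟨_, y₂.2.2, rfl⟩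
      have hwmem : c (y₁.1 - x) - c (y₂.1 - x) ∈ M := sub_mem hwK₁ hwK₂
      have hzero : (⟨_, hwmem⟩ : M) = 0 := by
        apply hinj
        intro j hj
        simp only [hc, Pi.sub_apply]
        rw [hcoord j hj]
        ring
      have hzero' : c (y₁.1 - x) - c (y₂.1 - x) = 0 := congrArg Subtype.val hzero
      have : ∀ j, y₁.1 j = y₂.1 j := by
        intro j
        have := congrFun hzero' j
        simp only [hc, Pi.sub_apply, Pi.zero_apply] at this
        push_cast at this
        have : (y₁.1 j : ℝ) = (y₂.1 j : ℝ) := by linarith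
        exact_mod_cast this
      exact Subtype.ext (funext this)
  obtain ⟨F, hF⟩ := key
  have hcardle : Nat.card S ≤ Nat.card (R → Fin (ℓ + 1)) :=
    Nat.card_le_card_of_injective F hF
  have hrhs : Nat.card ({ x // x ∈ R } → Fin (ℓ + 1)) = (ℓ + 1) ^ R.card := by
    simp [Nat.card_eq_fintype_card]
  rw [hrhs] at hcardle
  calc Set.ncard S = Nat.card S := rfl
    _ ≤ (ℓ + 1) ^ R.card := hcardle
    _ ≤ (ℓ + 1) ^ t := Nat.pow_le_pow_right (Nat.succ_le_succ (Nat.zero_le _)) hRcard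
end

section
/- Let (Enc, ⊕) be a deterministic path-independent algorithm with bound m, let ℓ < m/2, let K(2ℓ) = {x ∈ {-2ℓ,…,2ℓ}ⁿ : Enc(x) = Enc(0)}, and let t be the dimension of span_ℝ(K(2ℓ)). Then the number of distinct encoding states {Enc(x) : x ∈ {0,…,ℓ}ⁿ} is at least (ℓ+1)^{n−t}. Equivalently, log₂ of the number of distinct states is at least (n−t)·log₂(ℓ+1). -/
lemma walk_aux {n m : ℕ} {W : Type*} (Enc : (Fin n → ℤ) → W) (upd : W → Fin n → ℤ → W)
    (hpi : ∀ x : Fin n → ℤ, (∀ j, |x j| ≤ (m : ℤ) - 1) →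
      ∀ i : Fin n, ∀ ξ : ℤ, (ξ = 1 ∨ ξ = -1) →
        upd (Enc x) i ξ = Enc (Function.update x i (x i + ξ))) :
    ∀ (k : ℕ) (d a b : Fin n → ℤ), (∑ j, (d j).natAbs) ≤ k →
      Enc a = Enc b →
      (∀ j, |a j| ≤ (m:ℤ) - 1) → (∀ j, |a j - d j| ≤ (m:ℤ) - 1) →
      (∀ j, |b j| ≤ (m:ℤ) - 1) → (∀ j, |b j - d j| ≤ (m:ℤ) - 1) →
      Enc (a - d) = Enc (b - d) := by
  intro k
  induction k with
  | zero =>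
    intro d a b hsum hab _ _ _ _
    have hd : d = 0 := by
      funext j
      have := Finset.sum_eq_zero_iff.mp (Nat.le_zero.mp hsum) j (Finset.mem_univ j)
      simpa [Int.natAbs_eq_zero] using this
    simpa [hd] using hab
  | succ k ih =>
    intro d a b hsum hab ha had hb hbd
    by_cases hd : d = 0
    · simpa [hd] using hab
    · have : ∃ i, d i ≠ 0 := by
        by_contra h
        push_neg at h
        exact hd (funext h)
      obtain ⟨i, hi⟩ := this
      set ξ : ℤ := if 0 < d i then 1 else -1 with hξ
      have hξcases : ξ = 1 ∨ ξ = -1 := by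
        by_cases h : 0 < d i <;> simp [hξ, h]
      set a' := Function.update a i (a i + (-ξ)) with ha'
      set b' := Function.update b i (b i + (-ξ)) with hb'
      set d' := Function.update d i (d i - ξ) with hd'
      have hnegξ : (-ξ = 1 ∨ -ξ = -1) := by rcases hξcases with h | h <;> simp [h]
      have hstepa : Enc a' = upd (Enc a) i (-ξ) := (hpi a ha i (-ξ) hnegξ).symm
      have hstepb : Enc b' = upd (Enc b) i (-ξ) := (hpi b hb i (-ξ) hnegξ).symm
      have hab' : Enc a' = Enc b' := by rw [hstepa, hstepb, hab]
      -- bounds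
      have hbetween : ∀ (x dx : ℤ), |x| ≤ (m:ℤ) - 1 → |x - dx| ≤ (m:ℤ) - 1 →
          dx ≠ 0 → |x - (if 0 < dx then 1 else -1)| ≤ (m:ℤ) - 1 := by
        intro x dx h1 h2 h3
        rw [abs_le] at h1 h2 ⊢
        by_cases h : 0 < dx <;> simp [h] <;> omega
      have ha'bound : ∀ j, |a' j| ≤ (m:ℤ) - 1 := by
        intro j
        by_cases h : j = i
        · subst h
          simpa [ha', sub_eq_add_neg] using hbetween (a j) (d j) (ha j) (had j) hi
        · simpa [ha', Function.update_of_ne h] using ha j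
      have hb'bound : ∀ j, |b' j| ≤ (m:ℤ) - 1 := by
        intro j
        by_cases h : j = i
        · subst h
          simpa [hb', sub_eq_add_neg] using hbetween (b j) (d j) (hb j) (hbd j) hi
        · simpa [hb', Function.update_of_ne h] using hb j
      have ha'd' : ∀ j, |a' j - d' j| ≤ (m:ℤ) - 1 := by
        intro j
        by_cases h : j = i
        · subst h
          have : a' j - d' j = a j - d j := by simp [ha', hd']; ring
          rw [this]; exact had j
        · simpa [ha', hd', Function.update_of_ne h] using had j
      have hb'd' : ∀ j, |b' j - d' j| ≤ (m:ℤ) - 1 := by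
        intro j
        by_cases h : j = i
        · subst h
          have : b' j - d' j = b j - d j := by simp [hb', hd']; ring
          rw [this]; exact hbd j
        · simpa [hb', hd', Function.update_of_ne h] using hbd j
      have hsum' : (∑ j, (d' j).natAbs) ≤ k := by
        have h1 : ∑ j, (d' j).natAbs = (d i - ξ).natAbs + ∑ j ∈ Finset.univ.erase i, (d j).natAbs := by
          rw [hd']
          rw [show (∑ j, (Function.update d i (d i - ξ) j).natAbs) =
            ∑ j, (Function.update (fun j => (d j).natAbs) i ((d i - ξ).natAbs)) j from by
              apply Finset.sum_congr rfl; intro j _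
              by_cases h : j = i
              · subst h; simp
              · simp [Function.update_of_ne h]]
          rw [Finset.sum_update_of_mem (Finset.mem_univ i), Finset.sdiff_singleton_eq_erase]
        have h2 : ∑ j, (d j).natAbs = (d i).natAbs + ∑ j ∈ Finset.univ.erase i, (d j).natAbs :=
          (Finset.add_sum_erase _ _ (Finset.mem_univ i)).symm
        have h3 : (d i - ξ).natAbs + 1 = (d i).natAbs := by
          by_cases h : 0 < d i <;> simp only [hξ, if_pos, if_neg, h, if_true, if_false] <;> omega
        omega
      have hfin : a - d = a' - d' ∧ b - d = b' - d' := by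
        constructor <;> funext j <;> by_cases h : j = i
        · subst h; simp [ha', hd']; ring
        · simp [ha', hd', Function.update_of_ne h]
        · subst h; simp [hb', hd']; ring
        · simp [hb', hd', Function.update_of_ne h]
      rw [hfin.1, hfin.2]
      exact ih d' a' b' hsum' hab' ha'bound ha'd' hb'bound hb'd'

lemma coords_separating {n t : ℕ} (V : Submodule ℝ (Fin n → ℝ))
    (ht : Module.finrank ℝ V = t) :
    ∃ S : Finset (Fin n), S.card ≤ t ∧
      ∀ v ∈ V, (∀ j ∈ S, v j = 0) → v = 0 := by
  classical
  set φ : Fin n → Module.Dual ℝ V := fun j => (LinearMap.proj j).comp V.subtype with hφ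
  obtain ⟨b, hbsub, hbspan, hbind⟩ := exists_linearIndependent ℝ (Set.range φ)
  have hspan : Submodule.span ℝ (Set.range φ) = ⊤ := by
    have hco : (Submodule.span ℝ (Set.range φ)).dualCoannihilator = ⊥ := by
      rw [Submodule.eq_bot_iff]
      intro v hv
      rw [Submodule.mem_dualCoannihilator] at hv
      have : ∀ j, (v : Fin n → ℝ) j = 0 := fun j =>
        hv (φ j) (Submodule.subset_span (Set.mem_range_self j))
      exact Subtype.ext (funext this)
    have h2 := Subspace.finrank_add_finrank_dualCoannihilator_eq
      (Submodule.span ℝ (Set.range φ))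
    rw [hco, finrank_bot, add_zero] at h2
    exact Submodule.eq_top_of_finrank_eq (by rw [h2, Subspace.dual_finrank_eq])
  rw [hspan] at hbspan
  have hbfin : b.Finite := hbind.setFinite
  haveI := hbfin.fintype
  choose ψ hψ using fun (f : ↑b) => hbsub f.2
  set S : Finset (Fin n) := Finset.univ.image ψ with hS
  refine ⟨S, ?_, ?_⟩
  · calc S.card ≤ Finset.univ.card := Finset.card_image_le
      _ = Fintype.card ↑b := Finset.card_univ
      _ ≤ Module.finrank ℝ (Module.Dual ℝ V) := hbind.fintype_card_le_finrank
      _ = t := by rw [Subspace.dual_finrank_eq, ht]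
  · intro v hv hvS
    have hall : ∀ f : Module.Dual ℝ V, f ⟨v, hv⟩ = 0 := by
      have hle : Submodule.span ℝ b ≤
          LinearMap.ker (Module.Dual.eval ℝ V ⟨v, hv⟩ : Module.Dual ℝ V →ₗ[ℝ] ℝ) := by
        rw [Submodule.span_le]
        intro f hf
        rw [SetLike.mem_coe, LinearMap.mem_ker]
        have hfψ : φ (ψ ⟨f, hf⟩) = f := hψ ⟨f, hf⟩
        have : f ⟨v, hv⟩ = v (ψ ⟨f, hf⟩) := by
          conv_lhs => rw [← hfψ]
          simp [hφ]
        rw [Module.Dual.eval_apply, this]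
        exact hvS _ (Finset.mem_image_of_mem ψ (Finset.mem_univ _))
      intro f
      have : f ∈ Submodule.span ℝ b := by rw [hbspan]; trivial
      exact hle this
    have h0 : (⟨v, hv⟩ : V) = 0 := (Module.forall_dual_apply_eq_zero_iff ℝ _).mp hall
    exact Subtype.ext_iff.mp h0


/-- Space lower bound for path-independent algorithms: with bound `m`, `ℓ < m/2`,
and `t` the real dimension of the span of the zero-set
`K(2ℓ) = {z ∈ {-2ℓ,…,2ℓ}ⁿ : Enc z = Enc 0}`, the number of distinct encoding
states on `{0,…,ℓ}ⁿ` is at least `(ℓ+1)^{n-t}`. -/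
theorem space_lower_bound_from_zero_set {n m ℓ t : ℕ} {W : Type*}
    (Enc : (Fin n → ℤ) → W) (upd : W → Fin n → ℤ → W)
    (hpi : ∀ x : Fin n → ℤ, (∀ j, |x j| ≤ (m : ℤ) - 1) →
      ∀ i : Fin n, ∀ ξ : ℤ, (ξ = 1 ∨ ξ = -1) →
        upd (Enc x) i ξ = Enc (Function.update x i (x i + ξ)))
    (hℓm : 2 * ℓ < m)
    (ht : Module.finrank ℝ
      (Submodule.span ℝ ((fun z : Fin n → ℤ => (fun j => (z j : ℝ))) ''
        {z : Fin n → ℤ | (∀ j, |z j| ≤ (2 * ℓ : ℤ)) ∧ Enc z = Enc 0})) = t) :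
    (ℓ + 1) ^ (n - t) ≤
      Set.ncard (Enc '' {x : Fin n → ℤ | ∀ j, 0 ≤ x j ∧ x j ≤ (ℓ : ℤ)}) := by
  classical
  set V := Submodule.span ℝ ((fun z : Fin n → ℤ => (fun j => (z j : ℝ))) ''
      {z : Fin n → ℤ | (∀ j, |z j| ≤ (2 * ℓ : ℤ)) ∧ Enc z = Enc 0}) with hV
  obtain ⟨S, hScard, hSsep⟩ := coords_separating V ht
  set box : Finset (Fin n → ℤ) := Fintype.piFinset (fun _ => Finset.Icc (0:ℤ) (ℓ:ℤ)) with hbox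
  have hmem_box : ∀ y, y ∈ box ↔ ∀ j, 0 ≤ y j ∧ y j ≤ (ℓ:ℤ) := by
    intro y
    simp [hbox, Fintype.mem_piFinset, Finset.mem_Icc]
  -- Step A: two box points with equal encoding have difference in the zero set
  have stepA : ∀ y y', y ∈ box → y' ∈ box → Enc y = Enc y' →
      (∀ j, |y' j - y j| ≤ (2 * ℓ : ℤ)) ∧ Enc (y' - y) = Enc 0 := by
    intro y y' hy hy' he
    rw [hmem_box] at hy hy'
    have hbound : ∀ j, |y' j - y j| ≤ (2 * ℓ : ℤ) := by
      intro j
      have h1 := hy j; have h2 := hy' j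
      rw [abs_le]; omega
    refine ⟨hbound, ?_⟩
    have key := walk_aux Enc upd hpi (∑ j, (y j).natAbs) y y y' le_rfl he
      (fun j => by have h1 := hy j; rw [abs_le]; omega)
      (fun j => by have h1 := hy j; rw [abs_le]; omega)
      (fun j => by have h1 := hy' j; rw [abs_le]; omega)
      (fun j => by have h1 := hy j; have h2 := hy' j; rw [abs_le]; omega)
    have hyy : y - y = 0 := by funext j; simp
    rw [hyy] at key
    exact key.symm
  -- fiber bound
  have hfiber : ∀ w ∈ box.image Enc,
      (box.filter (fun y => Enc y = w)).card ≤ (ℓ + 1) ^ t := by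
    intro w hw
    set F : (Fin n → ℤ) → (Fin n → ℤ) := fun y j => if j ∈ S then y j else 0 with hF
    have hinj : Set.InjOn F (box.filter (fun y => Enc y = w)) := by
      intro y hy y' hy' hFyy'
      rw [Finset.coe_filter, Set.mem_setOf_eq] at hy hy'
      have he : Enc y = Enc y' := by rw [hy.2, hy'.2]
      obtain ⟨hb, h0⟩ := stepA y y' hy.1 hy'.1 he
      have hmemV : (fun j => ((y' j - y j : ℤ) : ℝ)) ∈ V :=
        Submodule.subset_span ⟨y' - y, ⟨fun j => by simpa using hb j, h0⟩, by
          funext j; simp⟩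
      have hz : ∀ j ∈ S, ((y' j - y j : ℤ) : ℝ) = 0 := by
        intro j hj
        have : y j = y' j := by
          have := congrFun hFyy' j
          simpa [hF, hj] using this
        simp [this]
      have := hSsep _ hmemV hz
      funext j
      have hj : ((y' j - y j : ℤ) : ℝ) = 0 := by simpa using congrFun this j
      have : y' j - y j = 0 := by exact_mod_cast hj
      omega
    calc (box.filter (fun y => Enc y = w)).card
        ≤ (Fintype.piFinset (fun j : Fin n =>
            if j ∈ S then Finset.Icc (0:ℤ) (ℓ:ℤ) else {0})).card := by
          apply Finset.card_le_card_of_injOn F _ hinj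
          intro y hy
          rw [Finset.mem_coe, Finset.mem_filter] at hy
          rw [Finset.mem_coe, Fintype.mem_piFinset]
          intro j
          by_cases hj : j ∈ S
          · simp only [hF, hj, if_true]
            rw [Finset.mem_Icc]
            exact ((hmem_box y).mp hy.1) j
          · simp [hF, hj]
      _ = ∏ j : Fin n, (if j ∈ S then (ℓ + 1) else 1) := by
          rw [Fintype.card_piFinset]
          apply Finset.prod_congr rfl
          intro j _
          by_cases hj : j ∈ S <;> simp [hj, Int.card_Icc]
      _ = (ℓ + 1) ^ S.card := by
          rw [Finset.prod_ite_mem, Finset.univ_inter, Finset.prod_const]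
      _ ≤ (ℓ + 1) ^ t := Nat.pow_le_pow_right (Nat.succ_le_succ (Nat.zero_le ℓ)) hScard
  -- counting
  have hcount : box.card ≤ (ℓ + 1) ^ t * (box.image Enc).card :=
    Finset.card_le_mul_card_image box _ hfiber
  have hboxcard : box.card = (ℓ + 1) ^ n := by
    rw [hbox, Fintype.card_piFinset]
    simp [Int.card_Icc]
  have hne : (box.image Enc).Nonempty := by
    refine ⟨Enc 0, Finset.mem_image_of_mem Enc ?_⟩
    rw [hmem_box]
    intro j
    simp
  have hmain : (ℓ + 1) ^ (n - t) ≤ (box.image Enc).card := by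
    by_cases hnt : t ≤ n
    · have : (ℓ + 1) ^ (n - t) * (ℓ + 1) ^ t ≤ (box.image Enc).card * (ℓ + 1) ^ t := by
        rw [← pow_add, Nat.sub_add_cancel hnt, Nat.mul_comm (box.image Enc).card]
        rw [← hboxcard]
        exact hcount
      exact Nat.le_of_mul_le_mul_right this (Nat.pow_pos (Nat.succ_pos ℓ))
    · rw [Nat.sub_eq_zero_of_le (le_of_not_ge hnt), pow_zero]
      exact hne.card_pos
  -- convert to ncard
  have hset : {x : Fin n → ℤ | ∀ j, 0 ≤ x j ∧ x j ≤ (ℓ : ℤ)} = ↑box := by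
    ext y
    rw [Set.mem_setOf_eq, Finset.mem_coe, hmem_box]
  rw [hset, ← Finset.coe_image, Set.ncard_coe_finset]
  exact hmain
end
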